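/- arXiv:2403.06657 — 4 statements merged into one kernel-verified Lean document; each statement's English description precedes it below -/
import Mathlib

section
/- Let A be a symmetric positive semidefinite k×k real matrix and let φ_max(m, A) be the largest m-sparse eigenvalue. Then for positive integers ℓ and m one has the sublinearity φ_max(ℓm, A) ≤ ℓ · φ_max(m, A). -/
/-!
Split the support of an `(ℓm)`-sparse unit vector `δ` into `ℓ` blocks of at most `m` indices,
so that `δ = δ₁ + ⋯ + δ_ℓ` with disjointly supported `m`-sparse pieces and `∑ ‖δⱼ‖² = 1`.
Positive semidefiniteness makes `x ↦ xᵀAx` convex, whence `δᵀAδ ≤ ℓ ∑ δⱼᵀAδⱼ`, and rescaling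
gives `δⱼᵀAδⱼ ≤ ‖δⱼ‖² φ_max(m, A)`.
-/

open Matrix

/-- The `m`-sparse maximal eigenvalue
`φ_max(m, A) := sup { δᵀAδ : ‖δ‖₀ ≤ m, ‖δ‖₂ = 1 }`. -/
noncomputable def sparseEigMax {k : ℕ} (A : Matrix (Fin k) (Fin k) ℝ) (m : ℝ) : ℝ :=
  sSup {x : ℝ | ∃ δ : Fin k → ℝ,
    ((Finset.univ.filter fun i => δ i ≠ 0).card : ℝ) ≤ m ∧
    (∑ i, δ i ^ 2) = 1 ∧ x = δ ⬝ᵥ A.mulVec δ}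

open Finset

theorem Finset.exists_labelling_of_card_le_mul {α : Type*} (S : Finset α) {l m : ℕ}
    (h : #S ≤ l * m) : ∃ p : α → ℕ, (∀ i ∈ S, p i < l) ∧ ∀ j, #{i ∈ S | p i = j} ≤ m := by
  have hle : (S : Set α).encard ≤ (↑(range l ×ˢ range m) : Set (ℕ × ℕ)).encard := by
    simp only [Set.encard_coe_eq_coe_finsetCard, card_product, card_range]
    exact_mod_cast h
  obtain ⟨f, hmaps, hinj⟩ := S.finite_toSet.exists_injOn_of_encard_le hle
  refine ⟨fun i => (f i).1, fun i hi => by simpa using (mem_product.1 (hmaps hi)).1, fun j => ?_⟩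
  calc #{i ∈ S | (f i).1 = j} ≤ #(range m) := by
        refine card_le_card_of_injOn (fun i => (f i).2) (fun i hi => ?_) fun a ha b hb hab => ?_
        · simpa using (mem_product.1 (hmaps (mem_filter.1 hi).1)).2
        · simp only [coe_filter] at ha hb
          exact hinj ha.1 hb.1 (Prod.ext (ha.2.trans hb.2.symm) hab)
    _ = m := card_range m

namespace Matrix

variable {n : Type*} [Fintype n] {A : Matrix n n ℝ}

theorem PosSemidef.two_mul_dotProduct_mulVec_le (hA : A.PosSemidef) (x y : n → ℝ) :
    2 * (x ⬝ᵥ A *ᵥ y) ≤ x ⬝ᵥ A *ᵥ x + y ⬝ᵥ A *ᵥ y := by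
  have hsymm : y ⬝ᵥ A *ᵥ x = x ⬝ᵥ A *ᵥ y := by
    rw [dotProduct_mulVec, ← mulVec_transpose, dotProduct_comm,
      (isHermitian_iff_isSymm.1 hA.1).eq]
  have := hA.dotProduct_mulVec_nonneg (x - y)
  simp only [star_trivial, mulVec_sub, dotProduct_sub, sub_dotProduct, hsymm] at this
  linarith

theorem PosSemidef.sum_dotProduct_mulVec_sum_le (hA : A.PosSemidef) {ι : Type*} (s : Finset ι)
    (v : ι → n → ℝ) :
    (∑ j ∈ s, v j) ⬝ᵥ A *ᵥ ∑ j ∈ s, v j ≤ #s * ∑ j ∈ s, v j ⬝ᵥ A *ᵥ v j := by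
  calc (∑ j ∈ s, v j) ⬝ᵥ A *ᵥ ∑ j ∈ s, v j = ∑ i ∈ s, ∑ j ∈ s, v i ⬝ᵥ A *ᵥ v j := by
        simp only [mulVec_sum, sum_dotProduct, dotProduct_sum]
        exact sum_comm
    _ ≤ ∑ i ∈ s, ∑ j ∈ s, (v i ⬝ᵥ A *ᵥ v i + v j ⬝ᵥ A *ᵥ v j) / 2 := by
        gcongr with i _ j _
        linarith [hA.two_mul_dotProduct_mulVec_le (v i) (v j)]
    _ = #s * ∑ j ∈ s, v j ⬝ᵥ A *ᵥ v j := by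
        simp only [← sum_div, sum_add_distrib, sum_const, nsmul_eq_mul, ← mul_sum]
        ring

theorem dotProduct_mulVec_le_sum_abs (A : Matrix n n ℝ) {x : n → ℝ} (hx : ∀ i, |x i| ≤ 1) :
    x ⬝ᵥ A *ᵥ x ≤ ∑ i, ∑ j, |A i j| := by
  calc x ⬝ᵥ A *ᵥ x = ∑ i, ∑ j, x i * A i j * x j := by
        simp only [dotProduct, mulVec, mul_sum, mul_assoc]
    _ ≤ ∑ i, ∑ j, |x i| * |A i j| * |x j| := by
        refine sum_le_sum fun i _ => sum_le_sum fun j _ => ?_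
        rw [← abs_mul, ← abs_mul]
        exact le_abs_self _
    _ ≤ ∑ i, ∑ j, 1 * |A i j| * 1 := by gcongr <;> simp [hx]
    _ = ∑ i, ∑ j, |A i j| := by simp

end Matrix

theorem exists_sum_range_eq_of_card_support_le {n : Type*} [Fintype n] {l m : ℕ} (δ : n → ℝ)
    (h : #{i | δ i ≠ 0} ≤ l * m) :
    ∃ v : ℕ → n → ℝ, ∑ j ∈ range l, v j = δ ∧
      ∑ j ∈ range l, ∑ i, v j i ^ 2 = ∑ i, δ i ^ 2 ∧ ∀ j, #{i | v j i ≠ 0} ≤ m := by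
  obtain ⟨p, hpl, hpm⟩ := exists_labelling_of_card_le_mul _ h
  have sum_label : ∀ (f : n → ℝ), (∀ i, δ i = 0 → f i = 0) →
      ∀ i, ∑ j ∈ range l, (if p i = j then f i else 0) = f i := by
    intro f hf i
    by_cases hi : δ i = 0
    · simp [hf i hi]
    · simp [hpl i (by simpa using hi)]
  refine ⟨fun j i => if p i = j then δ i else 0, ?_, ?_, fun j => ?_⟩
  · ext i
    simpa using sum_label δ (fun _ => id) i
  · rw [sum_comm]
    refine sum_congr rfl fun i _ => ?_
    simpa [ite_pow] using sum_label (δ · ^ 2) (by simp) i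
  · refine le_trans (card_le_card fun i => ?_) (hpm j)
    simp +contextual [ite_eq_right_iff]

section sparseEigMax

variable {k : ℕ} (A : Matrix (Fin k) (Fin k) ℝ)

theorem le_sparseEigMax {m : ℝ} {δ : Fin k → ℝ} (hδ : (#{i | δ i ≠ 0} : ℝ) ≤ m)
    (hnorm : ∑ i, δ i ^ 2 = 1) : δ ⬝ᵥ A *ᵥ δ ≤ sparseEigMax A m := by
  refine le_csSup ⟨∑ i, ∑ j, |A i j|, ?_⟩ ⟨δ, hδ, hnorm, rfl⟩
  rintro _ ⟨x, -, hx, rfl⟩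
  refine A.dotProduct_mulVec_le_sum_abs fun i => (sq_le_one_iff_abs_le_one _).1 ?_
  exact hx ▸ single_le_sum (f := (x · ^ 2)) (fun i _ => sq_nonneg _) (mem_univ i)

variable {A}

theorem sparseEigMax_nonneg (hA : A.PosSemidef) (m : ℝ) : 0 ≤ sparseEigMax A m :=
  Real.sSup_nonneg <| by
    rintro _ ⟨δ, -, -, rfl⟩
    simpa using hA.dotProduct_mulVec_nonneg δ

theorem dotProduct_mulVec_le_sum_sq_mul_sparseEigMax {m : ℝ} {δ : Fin k → ℝ}
    (hδ : (#{i | δ i ≠ 0} : ℝ) ≤ m) :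
    δ ⬝ᵥ A *ᵥ δ ≤ (∑ i, δ i ^ 2) * sparseEigMax A m := by
  rcases (sum_nonneg fun i _ => sq_nonneg (δ i) : 0 ≤ ∑ i, δ i ^ 2).eq_or_lt with hs | hs
  · obtain rfl : δ = 0 := funext fun i => pow_eq_zero_iff two_ne_zero |>.1 <|
      (sum_eq_zero_iff_of_nonneg fun i _ => sq_nonneg (δ i)).1 hs.symm i (mem_univ i)
    simp
  have hc : (√(∑ i, δ i ^ 2))⁻¹ ≠ 0 := by positivity
  have hu := le_sparseEigMax A (δ := (√(∑ i, δ i ^ 2))⁻¹ • δ) (by simpa [hc] using hδ)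
    (by simp [mul_pow, ← mul_sum, Real.sq_sqrt hs.le, hs.ne'])
  rwa [mulVec_smul, smul_dotProduct, dotProduct_smul, smul_eq_mul, smul_eq_mul, ← mul_assoc,
    ← sq, inv_pow, Real.sq_sqrt hs.le, inv_mul_le_iff₀ hs] at hu

theorem Matrix.PosSemidef.dotProduct_mulVec_le_mul_sparseEigMax (hA : A.PosSemidef) {l m : ℕ}
    {δ : Fin k → ℝ} (hδ : #{i | δ i ≠ 0} ≤ l * m) :
    δ ⬝ᵥ A *ᵥ δ ≤ l * ((∑ i, δ i ^ 2) * sparseEigMax A m) := by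
  obtain ⟨v, hsum, hnorm, hcard⟩ := exists_sum_range_eq_of_card_support_le δ hδ
  calc δ ⬝ᵥ A *ᵥ δ ≤ #(range l) * ∑ j ∈ range l, v j ⬝ᵥ A *ᵥ v j :=
        hsum ▸ hA.sum_dotProduct_mulVec_sum_le _ v
    _ ≤ l * ∑ j ∈ range l, (∑ i, v j i ^ 2) * sparseEigMax A m := by
        rw [card_range]
        gcongr with j
        exact dotProduct_mulVec_le_sum_sq_mul_sparseEigMax (by exact_mod_cast hcard j)
    _ = l * ((∑ i, δ i ^ 2) * sparseEigMax A m) := by rw [← sum_mul, hnorm]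

end sparseEigMax

theorem stmt_8_general {k : ℕ} (A : Matrix (Fin k) (Fin k) ℝ)
    (hA : A.PosSemidef) (l m : ℕ) :
    sparseEigMax A ((l * m : ℕ) : ℝ) ≤ (l : ℝ) * sparseEigMax A (m : ℝ) := by
  refine Real.sSup_le ?_ (mul_nonneg l.cast_nonneg (sparseEigMax_nonneg hA _))
  rintro _ ⟨δ, hδ, hnorm, rfl⟩
  have := hA.dotProduct_mulVec_le_mul_sparseEigMax (l := l) (m := m) (by exact_mod_cast hδ)
  rwa [hnorm, one_mul] at this

/-- Sublinearity of the sparse maximal eigenvalue: for a symmetric positive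
semidefinite matrix `A` and positive integers `ℓ, m`,
`φ_max(ℓm, A) ≤ ℓ · φ_max(m, A)`. -/
theorem stmt_8 {k : ℕ} (hk : 0 < k) (A : Matrix (Fin k) (Fin k) ℝ)
    (hA : A.PosSemidef) (l m : ℕ) (hl : 0 < l) (hm : 0 < m) :
    sparseEigMax A ((l * m : ℕ) : ℝ) ≤ (l : ℝ) * sparseEigMax A (m : ℝ) :=
  stmt_8_general A hA l m
end

section
/- Let Σ̂ and Σ be k×k real matrices, let s ≥ 1 be an integer, C > 0 a constant, and T ⊆ {1,…,k} with 1 ≤ |T| ≤ s. If δ ∈ ℝ^k satisfies the cone condition ‖δ_{T^c}‖₁ ≤ C‖δ_T‖₁ and Δ := max_{i,j} |Σ̂_{ij} − Σ_{ij}|, then δᵀΣ̂δ ≥ δᵀΣδ − (1 + C)² s Δ ‖δ‖₂². -/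
open Matrix

/-- If `δ` satisfies the cone condition `‖δ_{T^c}‖₁ ≤ C‖δ_T‖₁` for a nonempty
set `T` with `|T| ≤ s`, and every entry of `Σ̂ − Σ` is bounded in absolute value
by `Δ`, then `δᵀΣ̂δ ≥ δᵀΣδ − (1 + C)² s Δ ‖δ‖₂²`. -/
theorem stmt_9 {k : ℕ} (SigHat Sig : Matrix (Fin k) (Fin k) ℝ)
    (s : ℕ) (hs : 1 ≤ s) (C : ℝ) (hC : 0 < C)
    (T : Finset (Fin k)) (hT : T.Nonempty) (hTs : T.card ≤ s)
    (δ : Fin k → ℝ)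
    (hcone : ∑ j ∈ Tᶜ, |δ j| ≤ C * ∑ j ∈ T, |δ j|)
    (Δ : ℝ) (hΔ : ∀ i j, |SigHat i j - Sig i j| ≤ Δ) :
    δ ⬝ᵥ SigHat.mulVec δ ≥
      δ ⬝ᵥ Sig.mulVec δ - (1 + C) ^ 2 * (s : ℝ) * Δ * (∑ i, δ i ^ 2) := by
  obtain ⟨i0, hi0⟩ := hT
  have hΔ0 : 0 ≤ Δ := le_trans (abs_nonneg _) (hΔ i0 i0)
  -- the error term
  have key : |δ ⬝ᵥ SigHat.mulVec δ - δ ⬝ᵥ Sig.mulVec δ|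
      ≤ (1 + C) ^ 2 * (s : ℝ) * Δ * (∑ i, δ i ^ 2) := by
    have hdiff : δ ⬝ᵥ SigHat.mulVec δ - δ ⬝ᵥ Sig.mulVec δ
        = ∑ i, ∑ j, δ i * (SigHat i j - Sig i j) * δ j := by
      simp only [dotProduct, mulVec, Finset.mul_sum, ← Finset.sum_sub_distrib, mul_sub]
      exact Finset.sum_congr rfl fun i _ => Finset.sum_congr rfl fun j _ => by ring
    rw [hdiff]
    have h1 : |∑ i, ∑ j, δ i * (SigHat i j - Sig i j) * δ j|
        ≤ Δ * (∑ i, |δ i|) ^ 2 := by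
      calc |∑ i, ∑ j, δ i * (SigHat i j - Sig i j) * δ j|
          ≤ ∑ i, ∑ j, |δ i * (SigHat i j - Sig i j) * δ j| := by
            refine (Finset.abs_sum_le_sum_abs _ _).trans ?_
            exact Finset.sum_le_sum fun i _ => Finset.abs_sum_le_sum_abs _ _
        _ ≤ ∑ i, ∑ j, |δ i| * Δ * |δ j| := by
            refine Finset.sum_le_sum fun i _ => Finset.sum_le_sum fun j _ => ?_
            rw [abs_mul, abs_mul]
            exact mul_le_mul_of_nonneg_right
              (mul_le_mul_of_nonneg_left (hΔ i j) (abs_nonneg _)) (abs_nonneg _)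
        _ = Δ * (∑ i, |δ i|) ^ 2 := by
            simp [Finset.mul_sum, Finset.sum_mul, sq]
            ring_nf
            rw [Finset.sum_comm]
            congr 1; ext i; congr 1; ext j; ring
    refine h1.trans ?_
    have h2 : ∑ i, |δ i| ≤ (1 + C) * ∑ j ∈ T, |δ j| := by
      rw [← Finset.sum_add_sum_compl T]
      nlinarith
    have hTnn : 0 ≤ ∑ j ∈ T, |δ j| := Finset.sum_nonneg fun j _ => abs_nonneg _
    have h3 : (∑ i, |δ i|) ^ 2 ≤ (1 + C) ^ 2 * (∑ j ∈ T, |δ j|) ^ 2 := by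
      rw [← mul_pow]
      refine pow_le_pow_left₀ (Finset.sum_nonneg fun j _ => abs_nonneg _) h2 2
    have h4 : (∑ j ∈ T, |δ j|) ^ 2 ≤ (s : ℝ) * ∑ i, δ i ^ 2 := by
      calc (∑ j ∈ T, |δ j|) ^ 2 ≤ (T.card : ℝ) * ∑ j ∈ T, |δ j| ^ 2 :=
            sq_sum_le_card_mul_sum_sq
        _ ≤ (s : ℝ) * ∑ i, δ i ^ 2 := by
            refine mul_le_mul (by exact_mod_cast hTs) ?_
              (Finset.sum_nonneg fun j _ => by positivity) (by positivity)
            simp only [sq_abs]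
            exact Finset.sum_le_sum_of_subset_of_nonneg (Finset.subset_univ T)
              fun i _ _ => sq_nonneg _
    calc Δ * (∑ i, |δ i|) ^ 2 ≤ Δ * ((1 + C) ^ 2 * (∑ j ∈ T, |δ j|) ^ 2) := by
          exact mul_le_mul_of_nonneg_left h3 hΔ0
      _ ≤ Δ * ((1 + C) ^ 2 * ((s : ℝ) * ∑ i, δ i ^ 2)) := by
          exact mul_le_mul_of_nonneg_left
            (mul_le_mul_of_nonneg_left h4 (sq_nonneg _)) hΔ0
      _ = (1 + C) ^ 2 * (s : ℝ) * Δ * (∑ i, δ i ^ 2) := by ring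
  have := abs_le.mp key
  linarith [this.1]
end

section
/- Under the assumptions of the weighted-Lasso master lemma (penalty λ/n ≥ c‖S‖_∞ with score S based on ideal loadings, loadings satisfying ℓ̂υ̂⁰_j ≤ υ̂_j ≤ ûυ̂⁰_j with 1/c < ℓ̂ ≤ û), the prediction error obeys ‖β̂ − β₀‖_{2,n} ≤ (û + 1/c) · λ υ̂⁰_max √s / (n κ̂), where ‖δ‖_{2,n}² := (1/n)∑_{t=1}^n (x_tᵀδ)², s = |supp(β₀)|, υ̂⁰_max = max_j υ̂⁰_j, and κ̂² is the restricted eigenvalue of the empirical Gram matrix over the cone {δ : ‖δ_{T^c}‖₁ ≤ ĉ₀μ̂₀‖δ_T‖₁} with ĉ₀ = (ûc+1)/(ℓ̂c−1) and μ̂₀ = υ̂⁰_max/υ̂⁰_min, assuming κ̂ > 0. -/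
/-!
Comparing the Lasso objective at `β̂` and at `β₀`, and bounding the noise term with the penalty
condition, gives for `δ = β̂ - β₀` and `T = supp β₀` the master inequality
`‖δ‖²_{2,n} ≤ (λ / (n c)) ((û c + 1) ‖Υ⁰ δ_T‖₁ - (ℓ̂ c - 1) ‖Υ⁰ δ_{Tᶜ}‖₁)`.
As its left side is nonnegative, `δ` lies in the restricted cone, so the restricted eigenvalue and
Cauchy–Schwarz give `‖δ_T‖₁ ≤ √s ‖δ‖_{2,n} / κ`. Feeding this back into the master inequality
and dividing by `‖δ‖_{2,n}` gives the bound.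
-/

open Finset Matrix

theorem sum_mul_abs_le_mul_sum_abs {ι : Type*} (w δ : ι → ℝ) (s : Finset ι) {M : ℝ}
    (hM : ∀ j, w j ≤ M) :
    ∑ j ∈ s, w j * |δ j| ≤ M * ∑ j ∈ s, |δ j| := by
  rw [mul_sum]
  exact sum_le_sum fun j _ => mul_le_mul_of_nonneg_right (hM j) (abs_nonneg _)

theorem mul_sum_abs_le_sum_mul_abs {ι : Type*} (w δ : ι → ℝ) (s : Finset ι) {m : ℝ}
    (hm : ∀ j, m ≤ w j) :
    m * ∑ j ∈ s, |δ j| ≤ ∑ j ∈ s, w j * |δ j| := by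
  rw [mul_sum]
  exact sum_le_sum fun j _ => mul_le_mul_of_nonneg_right (hm j) (abs_nonneg _)

section PenalizedLeastSquares

variable {τ ι : Type*} [Fintype τ] [Fintype ι]

theorem sum_sq_sub_mulVec (X : Matrix τ ι ℝ) (y : τ → ℝ) (β β₀ : ι → ℝ) :
    ∑ t, (y - X *ᵥ β) t ^ 2 =
      ∑ t, (y - X *ᵥ β₀) t ^ 2 - 2 * ((Xᵀ *ᵥ (y - X *ᵥ β₀)) ⬝ᵥ (β - β₀)) +
        ∑ t, (X *ᵥ (β - β₀)) t ^ 2 := by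
  have hsplit : y - X *ᵥ β = (y - X *ᵥ β₀) - X *ᵥ (β - β₀) := by
    rw [mulVec_sub]; abel
  rw [hsplit, mulVec_transpose, ← dotProduct_mulVec]
  simp only [Pi.sub_apply, sub_sq, dotProduct, sum_add_distrib, sum_sub_distrib, mul_sum,
    mul_assoc]

theorem penalized_lsq_basic_inequality (X : Matrix τ ι ℝ) (y : τ → ℝ)
    (pen : (ι → ℝ) → ℝ) (w L : ℝ) (β₀ βhat : ι → ℝ)
    (hmin : w * ∑ t, (y - X *ᵥ βhat) t ^ 2 + L * pen βhat ≤
      w * ∑ t, (y - X *ᵥ β₀) t ^ 2 + L * pen β₀) :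
    w * ∑ t, (X *ᵥ (βhat - β₀)) t ^ 2 ≤
      2 * w * ((Xᵀ *ᵥ (y - X *ᵥ β₀)) ⬝ᵥ (βhat - β₀)) + L * (pen β₀ - pen βhat) := by
  rw [sum_sq_sub_mulVec X y βhat β₀] at hmin
  linear_combination hmin

theorem abs_le_mul_of_mul_abs_div_le {c s w L : ℝ} (hc : 0 < c) (hw : 0 < w)
    (h : c * |s / w| ≤ L) : |s| ≤ L / c * w := by
  rw [abs_div, abs_of_pos hw, mul_div_assoc', div_le_iff₀ hw] at h
  rw [div_mul_eq_mul_div, le_div_iff₀ hc]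
  linarith

theorem dotProduct_le_of_abs_le {g w : ι → ℝ} {K : ℝ} (h : ∀ j, |g j| ≤ K * w j)
    (δ : ι → ℝ) : g ⬝ᵥ δ ≤ K * ∑ j, w j * |δ j| := by
  rw [dotProduct, mul_sum]
  refine sum_le_sum fun j _ => ?_
  calc g j * δ j ≤ |g j| * |δ j| := by rw [← abs_mul]; exact le_abs_self _
    _ ≤ K * w j * |δ j| := mul_le_mul_of_nonneg_right (h j) (abs_nonneg _)
    _ = K * (w j * |δ j|) := mul_assoc _ _ _

theorem weighted_sum_abs_sub_le [DecidableEq ι] (υ υ0 β₀ β : ι → ℝ) {ℓ u : ℝ} (hυ : ∀ j, 0 ≤ υ j)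
    (hload : ∀ j, ℓ * υ0 j ≤ υ j ∧ υ j ≤ u * υ0 j) :
    ∑ j, υ j * |β₀ j| - ∑ j, υ j * |β j| ≤
      u * ∑ j ∈ univ.filter (β₀ · ≠ 0), υ0 j * |β j - β₀ j| -
        ℓ * ∑ j ∈ (univ.filter (β₀ · ≠ 0))ᶜ, υ0 j * |β j - β₀ j| := by
  set T := univ.filter (β₀ · ≠ 0)
  have hon : ∀ j ∈ T, υ j * |β₀ j| - υ j * |β j| ≤ u * (υ0 j * |β j - β₀ j|) := by
    intro j _
    calc υ j * |β₀ j| - υ j * |β j| = υ j * (|β₀ j| - |β j|) := by ring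
      _ ≤ υ j * |β j - β₀ j| := by
          rw [abs_sub_comm]
          exact mul_le_mul_of_nonneg_left (abs_sub_abs_le_abs_sub _ _) (hυ j)
      _ ≤ u * υ0 j * |β j - β₀ j| := mul_le_mul_of_nonneg_right (hload j).2 (abs_nonneg _)
      _ = u * (υ0 j * |β j - β₀ j|) := mul_assoc _ _ _
  have hoff : ∀ j ∈ Tᶜ, υ j * |β₀ j| - υ j * |β j| ≤ -(ℓ * (υ0 j * |β j - β₀ j|)) := by
    intro j hj
    have hβ₀ : β₀ j = 0 := by simpa [T] using hj
    rw [hβ₀, abs_zero, sub_zero, mul_zero, zero_sub, neg_le_neg_iff, ← mul_assoc]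
    exact mul_le_mul_of_nonneg_right (hload j).1 (abs_nonneg _)
  calc ∑ j, υ j * |β₀ j| - ∑ j, υ j * |β j|
      = ∑ j ∈ T, (υ j * |β₀ j| - υ j * |β j|) + ∑ j ∈ Tᶜ, (υ j * |β₀ j| - υ j * |β j|) := by
        rw [sum_add_sum_compl, sum_sub_distrib]
    _ ≤ ∑ j ∈ T, u * (υ0 j * |β j - β₀ j|) + ∑ j ∈ Tᶜ, -(ℓ * (υ0 j * |β j - β₀ j|)) :=
        add_le_add (sum_le_sum hon) (sum_le_sum hoff)
    _ = _ := by rw [sum_neg_distrib, ← mul_sum, ← mul_sum, sub_eq_add_neg]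

theorem lasso_master_inequality [DecidableEq ι] (X : Matrix τ ι ℝ) (y : τ → ℝ)
    (β₀ βhat υ υ0 : ι → ℝ) {w L c ℓ u : ℝ} (hc : 0 < c) (hL : 0 ≤ L) (hυ : ∀ j, 0 ≤ υ j)
    (hload : ∀ j, ℓ * υ0 j ≤ υ j ∧ υ j ≤ u * υ0 j)
    (hscore : ∀ j, |2 * w * (Xᵀ *ᵥ (y - X *ᵥ β₀)) j| ≤ L / c * υ0 j)
    (hmin : w * ∑ t, (y - X *ᵥ βhat) t ^ 2 + L * ∑ j, υ j * |βhat j| ≤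
      w * ∑ t, (y - X *ᵥ β₀) t ^ 2 + L * ∑ j, υ j * |β₀ j|) :
    w * ∑ t, (X *ᵥ (βhat - β₀)) t ^ 2 ≤
      L / c * ((u * c + 1) * ∑ j ∈ univ.filter (β₀ · ≠ 0), υ0 j * |βhat j - β₀ j| -
        (ℓ * c - 1) * ∑ j ∈ (univ.filter (β₀ · ≠ 0))ᶜ, υ0 j * |βhat j - β₀ j|) := by
  set T := univ.filter (β₀ · ≠ 0)
  have hbasic := penalized_lsq_basic_inequality X y (fun β => ∑ j, υ j * |β j|) w L β₀ βhat hmin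
  have hnoise : 2 * w * ((Xᵀ *ᵥ (y - X *ᵥ β₀)) ⬝ᵥ (βhat - β₀)) ≤
      L / c * (∑ j ∈ T, υ0 j * |βhat j - β₀ j| + ∑ j ∈ Tᶜ, υ0 j * |βhat j - β₀ j|) := by
    rw [sum_add_sum_compl, ← smul_eq_mul (2 * w), ← smul_dotProduct]
    exact dotProduct_le_of_abs_le hscore _
  have hpen := mul_le_mul_of_nonneg_left (weighted_sum_abs_sub_le υ υ0 β₀ βhat hυ hload) hL
  calc _ ≤ _ := hbasic
    _ ≤ _ := add_le_add hnoise hpen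
    _ = _ := by field_simp; ring

theorem sum_compl_abs_le_of_weighted_cone [DecidableEq ι] (w δ : ι → ℝ) (T : Finset ι)
    {m M p q : ℝ} (hm : 0 < m) (hp : 0 < p) (hq : 0 ≤ q) (hmw : ∀ j, m ≤ w j)
    (hwM : ∀ j, w j ≤ M)
    (hcone : p * ∑ j ∈ Tᶜ, w j * |δ j| ≤ q * ∑ j ∈ T, w j * |δ j|) :
    ∑ j ∈ Tᶜ, |δ j| ≤ q / p * (M / m) * ∑ j ∈ T, |δ j| := by
  have hchain : p * (m * ∑ j ∈ Tᶜ, |δ j|) ≤ q * (M * ∑ j ∈ T, |δ j|) :=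
    calc p * (m * ∑ j ∈ Tᶜ, |δ j|) ≤ p * ∑ j ∈ Tᶜ, w j * |δ j| :=
          mul_le_mul_of_nonneg_left (mul_sum_abs_le_sum_mul_abs w δ _ hmw) hp.le
      _ ≤ q * ∑ j ∈ T, w j * |δ j| := hcone
      _ ≤ q * (M * ∑ j ∈ T, |δ j|) :=
          mul_le_mul_of_nonneg_left (sum_mul_abs_le_mul_sum_abs w δ _ hwM) hq
  rw [show q / p * (M / m) * ∑ j ∈ T, |δ j| = q * (M * ∑ j ∈ T, |δ j|) / (p * m) by
    field_simp, le_div_iff₀ (mul_pos hp hm)]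
  linarith

theorem sum_abs_le_sqrt_card_mul_sqrt_div (δ : ι → ℝ) (T : Finset ι) {κ Q : ℝ} (hκ : 0 < κ)
    (hRE : κ ^ 2 * ∑ j, δ j ^ 2 ≤ Q) :
    ∑ j ∈ T, |δ j| ≤ √(#T : ℝ) * √Q / κ := by
  have hcs : (∑ j ∈ T, |δ j|) ^ 2 ≤ #T * (Q / κ ^ 2) :=
    calc (∑ j ∈ T, |δ j|) ^ 2 ≤ #T * ∑ j ∈ T, |δ j| ^ 2 := sq_sum_le_card_mul_sum_sq
      _ ≤ #T * ∑ j, δ j ^ 2 := by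
          simp only [sq_abs]
          gcongr
          exact subset_univ T
      _ ≤ #T * (Q / κ ^ 2) := by
          gcongr
          rwa [le_div_iff₀ (by positivity), mul_comm]
  calc ∑ j ∈ T, |δ j| ≤ √(#T * (Q / κ ^ 2)) :=
        Real.le_sqrt_of_sq_le hcs
    _ = √(#T : ℝ) * √Q / κ := by
        rw [Real.sqrt_mul (Nat.cast_nonneg _), Real.sqrt_div' _ (by positivity),
          Real.sqrt_sq hκ.le, mul_div_assoc]

theorem sqrt_le_of_le_mul_sqrt {q C : ℝ} (hC : 0 ≤ C) (h : q ≤ C * √q) : √q ≤ C := by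
  rcases (Real.sqrt_nonneg q).eq_or_lt with hq | hq
  · rw [← hq]; exact hC
  · refine le_of_mul_le_mul_right ?_ hq
    rwa [Real.mul_self_sqrt (Real.sqrt_pos.mp hq).le]

theorem sqrt_le_of_master_inequality [DecidableEq ι] (w δ : ι → ℝ) (T : Finset ι)
    {Q K p q m M κ : ℝ} (hK : 0 ≤ K) (hp : 0 < p) (hq : 0 ≤ q) (hm : 0 < m) (hM : 0 ≤ M)
    (hmw : ∀ j, m ≤ w j) (hwM : ∀ j, w j ≤ M) (hκ : 0 < κ) (hQ : 0 ≤ Q)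
    (hmaster : Q ≤ K * (q * ∑ j ∈ T, w j * |δ j| - p * ∑ j ∈ Tᶜ, w j * |δ j|))
    (hRE : ∑ j ∈ Tᶜ, |δ j| ≤ q / p * (M / m) * ∑ j ∈ T, |δ j| → κ ^ 2 * ∑ j, δ j ^ 2 ≤ Q) :
    √Q ≤ K * q * M * √(#T : ℝ) / κ := by
  refine sqrt_le_of_le_mul_sqrt (by positivity) ?_
  have hb : 0 ≤ p * ∑ j ∈ Tᶜ, w j * |δ j| :=
    mul_nonneg hp.le (sum_nonneg fun j _ => mul_nonneg (hm.le.trans (hmw j)) (abs_nonneg _))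
  rcases hK.eq_or_lt with rfl | hKpos
  · simpa using hmaster
  have hcone : p * ∑ j ∈ Tᶜ, w j * |δ j| ≤ q * ∑ j ∈ T, w j * |δ j| :=
    sub_nonneg.mp ((mul_nonneg_iff_of_pos_left hKpos).mp (hQ.trans hmaster))
  have hA := sum_abs_le_sqrt_card_mul_sqrt_div δ T hκ
    (hRE (sum_compl_abs_le_of_weighted_cone w δ T hm hp hq hmw hwM hcone))
  calc Q ≤ K * (q * ∑ j ∈ T, w j * |δ j|) := hmaster.trans (by gcongr; linarith)
    _ ≤ K * (q * (M * ∑ j ∈ T, |δ j|)) := by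
        gcongr
        exact sum_mul_abs_le_mul_sum_abs w δ T hwM
    _ ≤ K * (q * (M * (√(#T : ℝ) * √Q / κ))) := by gcongr
    _ = K * q * M * √(#T : ℝ) / κ * √Q := by ring

end PenalizedLeastSquares

theorem stmt_12_general {n k : ℕ} [NeZero k]
    (x : Fin n → Fin k → ℝ) (y : Fin n → ℝ) (β₀ : Fin k → ℝ)
    (υ0 : Fin k → ℝ) (hυ0 : ∀ j, 0 < υ0 j)
    (c lhat uhat lam : ℝ) (hc : 1 < c)
    (hl : 1 / c < lhat) (hlu : lhat ≤ uhat)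
    (hpen : ∀ j, c * |(2 / (n : ℝ)) *
        (∑ t, x t j * (y t - ∑ j', x t j' * β₀ j')) / υ0 j| ≤ lam / n)
    (υ : Fin k → ℝ)
    (hload : ∀ j, lhat * υ0 j ≤ υ j ∧ υ j ≤ uhat * υ0 j)
    (βhat : Fin k → ℝ)
    (hmin : ∀ β : Fin k → ℝ,
      (1 / (n : ℝ)) * ∑ t, (y t - ∑ j, x t j * βhat j) ^ 2 +
          (lam / (n : ℝ)) * ∑ j, υ j * |βhat j| ≤
        (1 / (n : ℝ)) * ∑ t, (y t - ∑ j, x t j * β j) ^ 2 +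
          (lam / (n : ℝ)) * ∑ j, υ j * |β j|)
    (κ : ℝ) (hκ : 0 < κ)
    -- restricted eigenvalue: κ² lower-bounds the empirical Gram quadratic form
    -- over the cone {δ : ‖δ_{T^c}‖₁ ≤ ĉ₀ μ̂₀ ‖δ_T‖₁}
    (hRE : ∀ δ : Fin k → ℝ,
      (∑ j ∈ (Finset.univ.filter fun j => β₀ j ≠ 0)ᶜ, |δ j| ≤
        ((uhat * c + 1) / (lhat * c - 1)) * ((⨆ j, υ0 j) / (⨅ j, υ0 j)) *
          ∑ j ∈ Finset.univ.filter fun j => β₀ j ≠ 0, |δ j|) →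
      κ ^ 2 * (∑ j, δ j ^ 2) ≤
        (1 / (n : ℝ)) * ∑ t, (∑ j, x t j * δ j) ^ 2) :
    Real.sqrt ((1 / (n : ℝ)) * ∑ t, (∑ j, x t j * (βhat j - β₀ j)) ^ 2) ≤
      (uhat + 1 / c) * (lam * (⨆ j, υ0 j) *
        Real.sqrt ((Finset.univ.filter fun j => β₀ j ≠ 0).card)) / ((n : ℝ) * κ) := by
  set T := univ.filter fun j => β₀ j ≠ 0
  set M := ⨆ j, υ0 j
  set m := ⨅ j, υ0 j
  set L := lam / (n : ℝ) with hLdef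
  have hc0 : 0 < c := one_pos.trans hc
  have hlc : 0 < lhat * c - 1 := by rwa [div_lt_iff₀ hc0, ← sub_pos] at hl
  have huc : 0 < uhat * c + 1 := by linarith [mul_le_mul_of_nonneg_right hlu hc0.le]
  have hυ : ∀ j, 0 ≤ υ j := fun j =>
    (mul_pos ((one_div_pos.mpr hc0).trans hl) (hυ0 j)).le.trans (hload j).1
  have hL : 0 ≤ L := (mul_nonneg hc0.le (abs_nonneg _)).trans (hpen 0)
  have hMle : ∀ j, υ0 j ≤ M := le_ciSup (Set.finite_range υ0).bddAbove
  have hmle : ∀ j, m ≤ υ0 j := ciInf_le (Set.finite_range υ0).bddBelow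
  have hm : 0 < m := by
    obtain ⟨j, hj⟩ := exists_eq_ciInf_of_finite (f := υ0)
    exact (hυ0 j).trans_eq hj
  have hscore : ∀ j, |2 * (1 / (n : ℝ)) * (xᵀ *ᵥ (y - x *ᵥ β₀)) j| ≤ L / c * υ0 j := fun j => by
    rw [mul_one_div]
    exact abs_le_mul_of_mul_abs_div_le hc0 (hυ0 j) (hpen j)
  rw [show (uhat + 1 / c) * (lam * M * √(#T : ℝ)) / ((n : ℝ) * κ) =
    L / c * (uhat * c + 1) * M * √(#T : ℝ) / κ by rw [hLdef]; field_simp]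
  exact sqrt_le_of_master_inequality υ0 (fun j => βhat j - β₀ j) T (div_nonneg hL hc0.le) hlc
    huc.le hm ((hυ0 0).le.trans (hMle 0)) hmle hMle hκ (by positivity)
    (lasso_master_inequality x y β₀ βhat υ υ0 hc0 hL hυ hload hscore (hmin β₀)) (hRE _)

/-- Prediction-error bound in the weighted-Lasso master lemma: under the
penalty-level condition `λ/n ≥ c‖S‖_∞` (score `S` based on ideal loadings
`υ0`), loadings satisfying `ℓ̂ υ0_j ≤ υ_j ≤ û υ0_j` with `1/c < ℓ̂ ≤ û`, and a
restricted-eigenvalue lower bound `κ > 0` over the cone with constant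
`ĉ₀ μ̂₀` (with `ĉ₀ = (ûc+1)/(ℓ̂c−1)`, `μ̂₀ = max υ0 / min υ0`), one has
`‖β̂ − β₀‖_{2,n} ≤ (û + 1/c) λ υ0_max √s / (n κ)`, where `s = |supp β₀|`. -/
theorem stmt_12 {n k : ℕ} (hn : 0 < n) [NeZero k]
    (x : Fin n → Fin k → ℝ) (y : Fin n → ℝ) (β₀ : Fin k → ℝ)
    (υ0 : Fin k → ℝ) (hυ0 : ∀ j, 0 < υ0 j)
    (c lhat uhat lam : ℝ) (hc : 1 < c)
    (hl : 1 / c < lhat) (hlu : lhat ≤ uhat)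
    (hpen : ∀ j, c * |(2 / (n : ℝ)) *
        (∑ t, x t j * (y t - ∑ j', x t j' * β₀ j')) / υ0 j| ≤ lam / n)
    (υ : Fin k → ℝ)
    (hload : ∀ j, lhat * υ0 j ≤ υ j ∧ υ j ≤ uhat * υ0 j)
    (βhat : Fin k → ℝ)
    (hmin : ∀ β : Fin k → ℝ,
      (1 / (n : ℝ)) * ∑ t, (y t - ∑ j, x t j * βhat j) ^ 2 +
          (lam / (n : ℝ)) * ∑ j, υ j * |βhat j| ≤
        (1 / (n : ℝ)) * ∑ t, (y t - ∑ j, x t j * β j) ^ 2 +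
          (lam / (n : ℝ)) * ∑ j, υ j * |β j|)
    (κ : ℝ) (hκ : 0 < κ)
    -- restricted eigenvalue: κ² lower-bounds the empirical Gram quadratic form
    -- over the cone {δ : ‖δ_{T^c}‖₁ ≤ ĉ₀ μ̂₀ ‖δ_T‖₁}
    (hRE : ∀ δ : Fin k → ℝ,
      (∑ j ∈ (Finset.univ.filter fun j => β₀ j ≠ 0)ᶜ, |δ j| ≤
        ((uhat * c + 1) / (lhat * c - 1)) * ((⨆ j, υ0 j) / (⨅ j, υ0 j)) *
          ∑ j ∈ Finset.univ.filter fun j => β₀ j ≠ 0, |δ j|) →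
      κ ^ 2 * (∑ j, δ j ^ 2) ≤
        (1 / (n : ℝ)) * ∑ t, (∑ j, x t j * δ j) ^ 2) :
    Real.sqrt ((1 / (n : ℝ)) * ∑ t, (∑ j, x t j * (βhat j - β₀ j)) ^ 2) ≤
      (uhat + 1 / c) * (lam * (⨆ j, υ0 j) *
        Real.sqrt ((Finset.univ.filter fun j => β₀ j ≠ 0).card)) / ((n : ℝ) * κ) :=
  stmt_12_general x y β₀ υ0 hυ0 c lhat uhat lam hc hl hlu hpen υ hload βhat hmin κ hκ hRE
end

section
/- Suppose constants b₁, b₂ > 0 and τ ∈ (0,1] satisfy ‖(Θ^h)_{i,1:p}‖₂ ≤ b₁ e^{-b₂ h^τ} for all h ∈ ℕ and all rows i ∈ {1,…,p} of the upper-left p×p block structure, where Θ is the pq×pq companion matrix of a VAR(q) (with identity blocks I_p on the subdiagonal and zero blocks elsewhere below the first block row). Then for all h ≥ 1 and all i ∈ {1,…,pq}, ‖(Θ^h)_{i,1:p}‖₂ ≤ (1+b₁)e^{b₂q} · e^{-(b₂/q^τ) h^τ}. -/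
/-- The `pq × pq` companion matrix of a VAR(q): first block row consists of the
coefficient matrices `B 0, …, B (q-1)`, and the remaining block rows are
`[I_{q-1} ⊗ I_p : 0]` (identity blocks on the subdiagonal). -/
def companion (p q : ℕ) (hp : 0 < p) (B : Fin q → Matrix (Fin p) (Fin p) ℝ) :
    Matrix (Fin (p * q)) (Fin (p * q)) ℝ := fun i j =>
  if h : (i : ℕ) < p then
    B ⟨(j : ℕ) / p, by
        have hj := j.isLt
        exact (Nat.div_lt_iff_lt_mul hp).mpr (by rwa [Nat.mul_comm q p])⟩
      ⟨(i : ℕ), h⟩ ⟨(j : ℕ) % p, Nat.mod_lt _ hp⟩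
  else if (i : ℕ) = (j : ℕ) + p then 1 else 0

lemma companion_shift (p q : ℕ) (hp : 0 < p) (B : Fin q → Matrix (Fin p) (Fin p) ℝ)
    (h : ℕ) (i : Fin (p*q)) (hi : p ≤ (i:ℕ)) (j : Fin (p*q)) :
    (companion p q hp B ^ (h+1)) i j
      = (companion p q hp B ^ h) ⟨(i:ℕ) - p, lt_of_le_of_lt (Nat.sub_le _ _) i.isLt⟩ j := by
  rw [pow_succ', Matrix.mul_apply]
  set i' : Fin (p*q) := ⟨(i:ℕ) - p, lt_of_le_of_lt (Nat.sub_le _ _) i.isLt⟩ with hi'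
  rw [Finset.sum_eq_single i']
  · have h1 : companion p q hp B i i' = 1 := by
      unfold companion
      rw [dif_neg (not_lt.mpr hi), if_pos]
      simp [hi']
      omega
    rw [h1, one_mul]
  · intro k _ hk
    have h0 : companion p q hp B i k = 0 := by
      unfold companion
      rw [dif_neg (not_lt.mpr hi), if_neg]
      intro hik
      exact hk (Fin.ext (by simp [hi']; omega))
    rw [h0, zero_mul]
  · intro hmem; exact absurd (Finset.mem_univ i') hmem

lemma companion_unroll (p q : ℕ) (hp : 0 < p) (B : Fin q → Matrix (Fin p) (Fin p) ℝ) :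
    ∀ m h (i : Fin (p*q)), m * p ≤ (i:ℕ) → m ≤ h → ∀ j,
    (companion p q hp B ^ h) i j
      = (companion p q hp B ^ (h - m)) ⟨(i:ℕ) - m*p, lt_of_le_of_lt (Nat.sub_le _ _) i.isLt⟩ j := by
  intro m
  induction m with
  | zero => intro h i _ _ j; simp
  | succ n ih =>
    intro h i hi hmh j
    obtain ⟨h', rfl⟩ : ∃ h', h = h' + 1 := ⟨h - 1, by omega⟩
    have hpi : p ≤ (i:ℕ) := le_trans (by nlinarith [Nat.succ_le_succ (Nat.zero_le n)]) hi
    have hnp : (n+1)*p = n*p + p := by ring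
    rw [companion_shift p q hp B h' i hpi j]
    rw [ih h' ⟨(i:ℕ) - p, lt_of_le_of_lt (Nat.sub_le _ _) i.isLt⟩ (by simp; omega) (by omega) j]
    have he : h' + 1 - (n+1) = h' - n := by omega
    have hidx : ((i:ℕ) - p) - n*p = (i:ℕ) - (n+1)*p := by omega
    rw [he]
    exact congrFun (congrArg _ (Fin.ext (by simpa using hidx))) j

lemma key_ineq (q h k : ℕ) (hq : 0 < q) (b₂ τ : ℝ) (hb₂ : 0 < b₂) (hτ0 : 0 < τ)
    (hkq : k < q) (hkh : k < h) :
    b₂ / (q:ℝ)^τ * (h:ℝ)^τ ≤ b₂ * ((h - k : ℕ):ℝ)^τ + b₂ * q := by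
  have hq1 : (1:ℝ) ≤ q := by exact_mod_cast hq
  have hqτ : (1:ℝ) ≤ (q:ℝ)^τ := Real.one_le_rpow hq1 hτ0.le
  have hcastsub : ((h-k:ℕ):ℝ) = (h:ℝ) - k := by
    rw [Nat.cast_sub hkh.le]
  by_cases hcase : q ≤ h
  · have h1 : (h:ℝ)/q ≤ ((h - k : ℕ):ℝ) := by
      rw [div_le_iff₀ (by positivity), hcastsub]
      have hh : (q:ℝ) ≤ h := by exact_mod_cast hcase
      have hk1 : (k:ℝ) ≤ (q:ℝ) - 1 := by
        have : (k:ℝ)+1 ≤ q := by exact_mod_cast hkq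
        linarith
      nlinarith
    have h2 : (h:ℝ)^τ / (q:ℝ)^τ ≤ ((h-k:ℕ):ℝ)^τ := by
      rw [← Real.div_rpow (by positivity) (by positivity)]
      exact Real.rpow_le_rpow (by positivity) h1 hτ0.le
    have h3 := mul_le_mul_of_nonneg_left h2 hb₂.le
    have hnn : (0:ℝ) ≤ b₂ * q := by positivity
    calc b₂/(q:ℝ)^τ * (h:ℝ)^τ = b₂ * ((h:ℝ)^τ/(q:ℝ)^τ) := by ring
    _ ≤ b₂ * ((h-k:ℕ):ℝ)^τ := h3
    _ ≤ _ := by linarith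
  · push_neg at hcase
    have h1 : (h:ℝ)^τ ≤ (q:ℝ)^τ :=
      Real.rpow_le_rpow (by positivity) (by exact_mod_cast hcase.le) hτ0.le
    have h2 : b₂/(q:ℝ)^τ * (h:ℝ)^τ ≤ b₂ := by
      rw [div_mul_eq_mul_div, div_le_iff₀ (by positivity)]
      nlinarith
    have h3 : (0:ℝ) ≤ ((h-k:ℕ):ℝ)^τ := Real.rpow_nonneg (by positivity) τ
    nlinarith

/-- If the rows `i ∈ [p]` of the first `p` columns of the powers `Θ^h` of the
companion matrix decay as `‖(Θ^h)_{i,1:p}‖₂ ≤ b₁ e^{-b₂ h^τ}`, then all rows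
`i ∈ [pq]` satisfy `‖(Θ^h)_{i,1:p}‖₂ ≤ (1+b₁) e^{b₂ q} e^{-(b₂/q^τ) h^τ}`. -/
theorem stmt_17 (p q : ℕ) (hp : 0 < p) (hq : 0 < q)
    (B : Fin q → Matrix (Fin p) (Fin p) ℝ)
    (hle : p ≤ p * q)
    (b₁ b₂ τ : ℝ) (hb₁ : 0 < b₁) (hb₂ : 0 < b₂) (hτ0 : 0 < τ) (hτ1 : τ ≤ 1)
    (hdecay : ∀ h : ℕ, 1 ≤ h → ∀ i : Fin p,
      Real.sqrt (∑ j : Fin p,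
          ((companion p q hp B ^ h) (Fin.castLE hle i) (Fin.castLE hle j)) ^ 2) ≤
        b₁ * Real.exp (-b₂ * (h : ℝ) ^ τ)) :
    ∀ h : ℕ, 1 ≤ h → ∀ i : Fin (p * q),
      Real.sqrt (∑ j : Fin p,
          ((companion p q hp B ^ h) i (Fin.castLE hle j)) ^ 2) ≤
        (1 + b₁) * Real.exp (b₂ * (q : ℝ)) *
          Real.exp (-(b₂ / (q : ℝ) ^ τ) * (h : ℝ) ^ τ) := by
  intro h hh i
  have hq1 : (1:ℝ) ≤ q := by exact_mod_cast hq
  have hqτ : (1:ℝ) ≤ (q:ℝ)^τ := Real.one_le_rpow hq1 hτ0.le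
  have hRpos : 0 < (1 + b₁) * Real.exp (b₂ * (q : ℝ)) *
      Real.exp (-(b₂ / (q : ℝ) ^ τ) * (h : ℝ) ^ τ) := by positivity
  set k := (i:ℕ) / p with hkdef
  have hkq : k < q := (Nat.div_lt_iff_lt_mul hp).mpr (lt_of_lt_of_eq i.isLt (Nat.mul_comm p q))
  have hkp : k * p ≤ (i:ℕ) := by
    rw [hkdef]; exact Nat.div_mul_le_self _ _
  have hmd := Nat.mod_add_div (i:ℕ) p
  have hmod := Nat.mod_lt (i:ℕ) hp
  have hc : k * p = p * ((i:ℕ)/p) := by rw [hkdef]; ring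
  have hikp : (i:ℕ) - k*p < p := by omega
  rcases lt_trichotomy h k with hlt | heq | hgt
  · -- h < k : all entries vanish
    have hhp : h * p ≤ (i:ℕ) := by
      have h1 : (h+1) * p ≤ k * p := Nat.mul_le_mul_right p hlt
      have h2 : (h+1)*p = h*p + p := by ring
      omega
    have hz : ∀ j : Fin p, (companion p q hp B ^ h) i (Fin.castLE hle j) = 0 := by
      intro j
      rw [companion_unroll p q hp B h h i hhp le_rfl, Nat.sub_self, pow_zero]
      apply Matrix.one_apply_ne
      apply Fin.ne_of_val_ne
      simp only [Fin.castLE]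
      have h1 : (h+1) * p ≤ k * p := Nat.mul_le_mul_right p hlt
      have h2 : (h+1)*p = h*p + p := by ring
      have hj := j.isLt
      omega
    simp only [hz]
    simp [Real.sqrt_zero]
    positivity
  · -- h = k : identity row, norm 1
    have hhp : h * p ≤ (i:ℕ) := by rw [heq]; exact hkp
    have hikp' : (i:ℕ) - h*p < p := by rw [heq]; exact hikp
    have hz : (∑ j : Fin p, ((companion p q hp B ^ h) i (Fin.castLE hle j)) ^ 2) = 1 := by
      have hun : ∀ j : Fin (p*q), (companion p q hp B ^ h) i j
          = (companion p q hp B ^ (h - h)) ⟨(i:ℕ) - h*p, lt_of_le_of_lt (Nat.sub_le _ _) i.isLt⟩ j :=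
        companion_unroll p q hp B h h i hhp le_rfl
      simp only [hun, Nat.sub_self, pow_zero]
      rw [Finset.sum_eq_single (⟨(i:ℕ) - h*p, hikp'⟩ : Fin p)]
      · rw [show Fin.castLE hle (⟨(i:ℕ) - h*p, hikp'⟩ : Fin p)
            = (⟨(i:ℕ) - h*p, lt_of_le_of_lt (Nat.sub_le _ _) i.isLt⟩ : Fin (p*q)) from Fin.ext rfl,
          Matrix.one_apply_eq, one_pow]
      · intro j _ hj
        have hne : (⟨(i:ℕ) - h*p, lt_of_le_of_lt (Nat.sub_le _ _) i.isLt⟩ : Fin (p*q))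
            ≠ Fin.castLE hle j := by
          apply Fin.ne_of_val_ne
          simp only [Fin.castLE, Fin.coe_castLE]
          exact fun hv => hj (Fin.ext hv.symm)
        rw [Matrix.one_apply_ne hne]
        norm_num
      · intro hmem; exact absurd (Finset.mem_univ _) hmem
    rw [hz, Real.sqrt_one]
    have hX : b₂ / (q:ℝ)^τ * (h:ℝ)^τ ≤ b₂ * q := by
      have hhq : h ≤ q := by omega
      have h1 : (h:ℝ)^τ ≤ (q:ℝ)^τ :=
        Real.rpow_le_rpow (by positivity) (by exact_mod_cast hhq) hτ0.le
      rw [div_mul_eq_mul_div, div_le_iff₀ (by positivity)]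
      have hnn : (0:ℝ) ≤ b₂ * ((q:ℝ)^τ) * ((q:ℝ) - 1) :=
        mul_nonneg (mul_nonneg hb₂.le (by linarith)) (by linarith)
      nlinarith [mul_le_mul_of_nonneg_left h1 hb₂.le]
    have h2 : (1:ℝ) ≤ Real.exp (b₂ * q) * Real.exp (-(b₂/(q:ℝ)^τ) * (h:ℝ)^τ) := by
      rw [← Real.exp_add]
      apply Real.one_le_exp
      nlinarith
    nlinarith [Real.exp_pos (b₂ * (q:ℝ)), Real.exp_pos (-(b₂/(q:ℝ)^τ) * (h:ℝ)^τ),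
      mul_pos (Real.exp_pos (b₂ * (q:ℝ))) (Real.exp_pos (-(b₂/(q:ℝ)^τ) * (h:ℝ)^τ))]
  · -- h > k
    have hun := companion_unroll p q hp B k h i hkp hgt.le
    set i'' : Fin p := ⟨(i:ℕ) - k*p, hikp⟩ with hi''
    have hcast : Fin.castLE hle i''
        = (⟨(i:ℕ) - k*p, lt_of_le_of_lt (Nat.sub_le _ _) i.isLt⟩ : Fin (p*q)) := Fin.ext rfl
    have hsum : (∑ j : Fin p, ((companion p q hp B ^ h) i (Fin.castLE hle j)) ^ 2)
        = ∑ j : Fin p, ((companion p q hp B ^ (h-k)) (Fin.castLE hle i'') (Fin.castLE hle j)) ^ 2 := by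
      apply Finset.sum_congr rfl
      intro j _
      rw [hun (Fin.castLE hle j), hcast]
    rw [hsum]
    have hd := hdecay (h-k) (by omega) i''
    refine le_trans hd ?_
    have hkey := key_ineq q h k hq b₂ τ hb₂ hτ0 hkq hgt
    have hexp : Real.exp (-b₂ * ((h-k:ℕ):ℝ)^τ)
        ≤ Real.exp (b₂ * q) * Real.exp (-(b₂/(q:ℝ)^τ) * (h:ℝ)^τ) := by
      rw [← Real.exp_add]
      apply Real.exp_le_exp.mpr
      nlinarith
    rw [mul_assoc]
    exact mul_le_mul (by linarith) hexp (Real.exp_pos _).le (by linarith)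
end
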